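/- For any crossed module (H, G, μ), there exists a surjective homomorphism from the second Baues–Ellis homology H₂(H, G, μ) onto the second integral group homology H₂(G/μ(H)). -/

import Mathlib

/-- A crossed module `(H, G, mu)`: a group homomorphism together with an
action of `G` on `H` by automorphisms, satisfying the precrossed module identity and
the Peiffer identity. -/
structure CrossedModule (H G : Type) [Group H] [Group G] where
  μ : H →* G
  act : G →* MulAut H
  pre : ∀ (g : G) (h : H), μ (act g h) = g * μ h * g⁻¹
  peiffer : ∀ h h' : H, act (μ h) h' = h * h' * h⁻¹

/-- The `n`-th level of the nerve of a crossed module `(H, G, μ)`, realised as the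
set `(Fin n → H) × G` (iterated semidirect product `H ⋊ (⋯(H ⋊ G)⋯)`). -/
abbrev NerveLvl (H G : Type) (n : ℕ) : Type := (Fin n → H) × G

variable {H G : Type} [Group H] [Group G]

/-- The "twisting" element `μ(h_{i+2})⋯μ(h_n)·g` of `G` by which the `(i+1)`-st
semidirect factor of `H` is acted on in the iterated semidirect product. -/
def nerveTwist (X : CrossedModule H G) {n : ℕ} (a : Fin n → H) (g : G) (i : Fin n) : G :=
  (((List.ofFn a).drop ((i : ℕ) + 1)).map X.μ).prod * g

/-- Multiplication of the iterated semidirect product `H ⋊ (⋯(H ⋊ G)⋯)`. -/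
def nerveMul (X : CrossedModule H G) {n : ℕ} (x y : NerveLvl H G n) : NerveLvl H G n :=
  (fun i => x.1 i * X.act (nerveTwist X x.1 x.2 i) (y.1 i), x.2 * y.2)

/-- The face maps of the nerve of a crossed module. -/
def nerveFace (X : CrossedModule H G) (n : ℕ)
    (i : Fin (n + 2)) (x : NerveLvl H G (n + 1)) : NerveLvl H G n :=
  (fun j : Fin n =>
      if (j : ℕ) + 1 < (i : ℕ) then x.1 j.castSucc
      else if (j : ℕ) + 1 = (i : ℕ) then x.1 j.castSucc * x.1 j.succ
      else x.1 j.succ,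
   if (i : ℕ) = n + 1 then X.μ (x.1 (Fin.last n)) * x.2 else x.2)

/-- Face maps of the nerve of a (multiplicative) structure `K`: the standard
simplicial-set faces of the classifying space, for any binary operation `m`. -/
def barFace {K : Type} (m : K → K → K) {q : ℕ} (i : Fin (q + 2))
    (f : Fin (q + 1) → K) (j : Fin q) : K :=
  if (j : ℕ) + 1 < (i : ℕ) then f j.castSucc
  else if (j : ℕ) + 1 = (i : ℕ) then m (f j.castSucc) (f j.succ)
  else f j.succ

/-- The `n`-simplices of the diagonal of the bisimplicial set obtained by taking the
(ordinary) nerve of the group `Nerveₙ(H, G, μ)` in each simplicial dimension. -/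
abbrev DiagNerve (H G : Type) (n : ℕ) : Type := Fin n → NerveLvl H G n

/-- The face maps of the diagonal simplicial set. -/
def diagFace (X : CrossedModule H G) (n : ℕ) (i : Fin (n + 2))
    (f : DiagNerve H G (n + 1)) : DiagNerve H G n :=
  fun j => nerveFace X n i (barFace (nerveMul X) i f j)

/-- The chain group of `ℤ`-chains on the diagonal in dimension `n`. -/
abbrev BEChain (H G : Type) (n : ℕ) : Type := FreeAbelianGroup (DiagNerve H G n)

/-- The simplicial boundary map: the alternating sum of the face maps. -/
def beBoundary (X : CrossedModule H G) (n : ℕ) :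
    BEChain H G (n + 1) →+ BEChain H G n :=
  ∑ i : Fin (n + 2), ((-1 : ℤ) ^ (i : ℕ)) • FreeAbelianGroup.map (diagFace X n i)

/-- The cycles of the Baues–Ellis chain complex. -/
def beCycles (X : CrossedModule H G) : (n : ℕ) → AddSubgroup (BEChain H G n)
  | 0 => ⊤
  | (m + 1) => (beBoundary X m).ker

/-- The Baues–Ellis homology (with integral coefficients) of a crossed module:
the homology of the `ℤ`-chains on the diagonal of the bisimplicial nerve. -/
def BEHomology (X : CrossedModule H G) (n : ℕ) : Type :=
  beCycles X n ⧸ ((beBoundary X n).range.addSubgroupOf (beCycles X n))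

noncomputable instance (X : CrossedModule H G) (n : ℕ) :
    AddCommGroup (BEHomology X n) :=
  QuotientAddGroup.Quotient.addCommGroup _

/-- Chains of the bar complex computing the integral homology of a group `Q`. -/
abbrev GrpChain (Q : Type) (n : ℕ) : Type := FreeAbelianGroup (Fin n → Q)

/-- The bar boundary map for the integral homology of a group. -/
def grpBoundary (Q : Type) [Group Q] (n : ℕ) : GrpChain Q (n + 1) →+ GrpChain Q n :=
  ∑ i : Fin (n + 2), ((-1 : ℤ) ^ (i : ℕ)) •
    FreeAbelianGroup.map (fun f => barFace (fun a b => a * b) i f)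

/-- The cycles of the bar complex. -/
def grpCycles (Q : Type) [Group Q] : (n : ℕ) → AddSubgroup (GrpChain Q n)
  | 0 => ⊤
  | (m + 1) => (grpBoundary Q m).ker

/-- The integral homology of the group `Q` (the homology of `ℤ` applied to the nerve
of `Q`, i.e. the homology of the classifying space `BQ`). -/
def GrpHomology (Q : Type) [Group Q] (n : ℕ) : Type :=
  grpCycles Q n ⧸ ((grpBoundary Q n).range.addSubgroupOf (grpCycles Q n))

noncomputable instance (Q : Type) [Group Q] (n : ℕ) : AddCommGroup (GrpHomology Q n) :=
  QuotientAddGroup.Quotient.addCommGroup _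

instance crossedModule_range_normal' {H G : Type} [Group H] [Group G]
    (X : CrossedModule H G) : X.μ.range.Normal := by
  constructor
  rintro x ⟨h, rfl⟩ g
  exact ⟨X.act g h, X.pre g h⟩

/-!
Sending a diagonal simplex to the `G`-coordinates of its vertices, read modulo `μ(H)`, is a
simplicial map from the diagonal to the nerve of `G/μ(H)`, so it induces a map on `H₂`. It is
split in dimensions `1` and `2` compatibly with all faces: lift `q` through the set-theoretic
section `s = Quotient.out`, and repair the `2`-simplices with a `μ`-preimage `h` of the defect
`s q₀ * s q₁ * (s (q₀ q₁))⁻¹`, which exists because `s` is multiplicative modulo `μ(H)`. Hence every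
`2`-cycle of `G/μ(H)` is the image of a `2`-cycle of the diagonal.
-/

theorem FreeAbelianGroup.map_comp_sum_zsmul_map {α β γ δ : Type} {m : ℕ} (c : Fin m → ℤ)
    (d : Fin m → α → β) (d' : Fin m → γ → δ) (f : α → γ) (g : β → δ)
    (h : ∀ i x, g (d i x) = d' i (f x)) :
    (map g).comp (∑ i, c i • map (d i)) = (∑ i, c i • map (d' i)).comp (map f) := by
  refine lift_ext _ _ fun x => ?_
  simp only [AddMonoidHom.comp_apply, AddMonoidHom.finsetSum_apply, AddMonoidHom.smul_apply,
    map_sum, map_zsmul, map_of_apply, h]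

theorem FreeAbelianGroup.leftInverse_map {α β : Type} {f : β → α} {g : α → β}
    (h : Function.LeftInverse f g) : Function.LeftInverse (map f) (map g) := fun x => by
  rw [← map_comp_apply, h.comp_eq_id, map_id_apply]

theorem exists_surjective_homology_map_of_leftInverse {A₁ A₂ A₃ B₁ B₂ B₃ : Type}
    [AddCommGroup A₁] [AddCommGroup A₂] [AddCommGroup A₃]
    [AddCommGroup B₁] [AddCommGroup B₂] [AddCommGroup B₃]
    {dA₂ : A₂ →+ A₁} {dA₃ : A₃ →+ A₂} {dB₂ : B₂ →+ B₁} {dB₃ : B₃ →+ B₂}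
    {φ₁ : A₁ →+ B₁} {φ₂ : A₂ →+ B₂} {φ₃ : A₃ →+ B₃} {s₁ : B₁ →+ A₁} {s₂ : B₂ →+ A₂}
    (hφ₂ : φ₁.comp dA₂ = dB₂.comp φ₂) (hφ₃ : φ₂.comp dA₃ = dB₃.comp φ₃)
    (hs₂ : dA₂.comp s₂ = s₁.comp dB₂) (hφs : Function.LeftInverse φ₂ s₂) :
    ∃ ψ : dA₂.ker ⧸ dA₃.range.addSubgroupOf dA₂.ker →+ dB₂.ker ⧸ dB₃.range.addSubgroupOf dB₂.ker,
      Function.Surjective ψ := by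
  have hφ_ker (a : A₂) (ha : dA₂ a = 0) : dB₂ (φ₂ a) = 0 := by
    rw [← AddMonoidHom.comp_apply, ← hφ₂, AddMonoidHom.comp_apply, ha, map_zero]
  have hs_ker (b : B₂) (hb : dB₂ b = 0) : dA₂ (s₂ b) = 0 := by
    rw [← AddMonoidHom.comp_apply, hs₂, AddMonoidHom.comp_apply, hb, map_zero]
  let φZ : dA₂.ker →+ dB₂.ker := (φ₂.comp dA₂.ker.subtype).codRestrict _ fun a => hφ_ker a a.2
  refine ⟨QuotientAddGroup.map _ _ φZ ?_, ?_⟩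
  · rintro a ⟨c, hc⟩
    exact ⟨φ₃ c, by rw [← AddMonoidHom.comp_apply, ← hφ₃, AddMonoidHom.comp_apply, hc]; rfl⟩
  · rintro ⟨b⟩
    exact ⟨QuotientAddGroup.mk ⟨s₂ b, hs_ker b b.2⟩, congrArg _ (Subtype.ext (hφs b))⟩

namespace CrossedModule

variable (X : CrossedModule H G)

def diagProj (n : ℕ) (f : DiagNerve H G n) : Fin n → G ⧸ X.μ.range :=
  fun j => ((f j).2 : G ⧸ X.μ.range)

theorem coe_μ_eq_one (h : H) : ((X.μ h : G) : G ⧸ X.μ.range) = 1 :=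
  (QuotientGroup.eq_one_iff _).mpr ⟨h, rfl⟩

theorem coe_nerveFace_snd (n : ℕ) (i : Fin (n + 2)) (x : NerveLvl H G (n + 1)) :
    ((nerveFace X n i x).2 : G ⧸ X.μ.range) = x.2 := by
  unfold nerveFace
  split_ifs
  · rw [QuotientGroup.mk_mul, coe_μ_eq_one, one_mul]
  · rfl

theorem diagProj_diagFace (n : ℕ) (i : Fin (n + 2)) (f : DiagNerve H G (n + 1)) :
    X.diagProj n (diagFace X n i f) = barFace (· * ·) i (X.diagProj (n + 1) f) := by
  funext j
  simp only [diagProj, diagFace, coe_nerveFace_snd, barFace]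
  split_ifs <;> simp [nerveMul]

theorem map_diagProj_comp_beBoundary (n : ℕ) :
    (FreeAbelianGroup.map (X.diagProj n)).comp (beBoundary X n)
      = (grpBoundary (G ⧸ X.μ.range) n).comp (FreeAbelianGroup.map (X.diagProj (n + 1))) :=
  FreeAbelianGroup.map_comp_sum_zsmul_map _ _ _ _ _ (X.diagProj_diagFace n)

theorem exists_μ_eq_out_mul_out_mul_out_inv (q₁ q₂ : G ⧸ X.μ.range) :
    ∃ h, X.μ h = q₁.out * q₂.out * (q₁ * q₂).out⁻¹ := by
  rw [← MonoidHom.mem_range, ← QuotientGroup.eq_one_iff]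
  simp

noncomputable def defectLift (q₁ q₂ : G ⧸ X.μ.range) : H :=
  (X.exists_μ_eq_out_mul_out_mul_out_inv q₁ q₂).choose

theorem μ_defectLift (q₁ q₂ : G ⧸ X.μ.range) :
    X.μ (X.defectLift q₁ q₂) = q₁.out * q₂.out * (q₁ * q₂).out⁻¹ :=
  (X.exists_μ_eq_out_mul_out_mul_out_inv q₁ q₂).choose_spec

noncomputable def liftBar₁ (q : Fin 1 → G ⧸ X.μ.range) : DiagNerve H G 1 :=
  fun _ => (1, (q 0).out)

/-- The face `d₁` multiplies the two vertices: their `H`-entries become `h⁻¹ * h = 1` and their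
`G`-entry `(μ h)⁻¹ * s q₀ * s q₁ = s (q₀ q₁)`. The face `d₂` multiplies the `G`-entry of the first
vertex by `μ h`, giving back `s q₀`. -/
noncomputable def liftBar₂ (q : Fin 2 → G ⧸ X.μ.range) : DiagNerve H G 2 :=
  let h := X.defectLift (q 0) (q 1)
  ![(![1, h], (X.μ h)⁻¹ * (q 0).out), (![X.act (q 0).out⁻¹ h⁻¹, 1], (q 1).out)]

theorem diagFace_liftBar₂ (q : Fin 2 → G ⧸ X.μ.range) (i : Fin 3) :
    diagFace X 1 i (X.liftBar₂ q) = X.liftBar₁ (barFace (· * ·) i q) := by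
  have hμ := X.μ_defectLift (q 0) (q 1)
  funext j
  fin_cases i <;> fin_cases j <;>
    simp [diagFace, nerveFace, barFace, nerveMul, nerveTwist, liftBar₁, liftBar₂, List.ofFn_succ,
      hμ, Prod.ext_iff, funext_iff, Fin.forall_fin_one] <;>
    group

theorem beBoundary_comp_map_liftBar₂ :
    (beBoundary X 1).comp (FreeAbelianGroup.map X.liftBar₂)
      = (FreeAbelianGroup.map X.liftBar₁).comp (grpBoundary (G ⧸ X.μ.range) 1) :=
  (FreeAbelianGroup.map_comp_sum_zsmul_map _ _ _ _ _
    fun i q => (X.diagFace_liftBar₂ q i).symm).symm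

theorem leftInverse_diagProj_liftBar₂ : Function.LeftInverse (X.diagProj 2) X.liftBar₂ := by
  intro q
  funext j
  fin_cases j <;> simp [diagProj, liftBar₂, coe_μ_eq_one]

end CrossedModule

/-- For any crossed module `(H, G, μ)` there is a surjective
homomorphism from the second Baues–Ellis homology `H₂(H, G, μ)` onto the second
integral group homology `H₂(G/μ(H))`. -/
theorem second_homology_surjection {H G : Type} [Group H] [Group G]
    (X : CrossedModule H G) :
    ∃ φ : BEHomology X 2 →+ GrpHomology (G ⧸ X.μ.range) 2,
      Function.Surjective φ :=
  exists_surjective_homology_map_of_leftInverse (X.map_diagProj_comp_beBoundary 1)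
    (X.map_diagProj_comp_beBoundary 2) X.beBoundary_comp_map_liftBar₂
    (FreeAbelianGroup.leftInverse_map X.leftInverse_diagProj_liftBar₂)
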